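/- Let N ≥ 1 be an integer and λ_1, …, λ_N real numbers, and let W(λ) be the 2N×2N matrix whose (k, 2i−1) entry is λ_i^{k−1} and whose (k, 2i) entry is (k−1)λ_i^{k−2} for 1 ≤ k ≤ 2N and 1 ≤ i ≤ N (with the convention that (k−1)λ^{k−2} = 0 when k = 1). Then det(W(λ)) = ∏_{1 ≤ i < j ≤ N} (λ_i − λ_j)^4. -/

import Mathlib

/-- The confluent Vandermonde matrix: for `1 ≤ k ≤ 2N` and `1 ≤ i ≤ N` (here 0-indexed),
the `(k, 2i-1)` entry is `λ i ^ (k-1)` and the `(k, 2i)` entry is `(k-1) * λ i ^ (k-2)`. -/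
def confluentVandermonde (N : ℕ) (lam : Fin N → ℝ) : Matrix (Fin (2 * N)) (Fin (2 * N)) ℝ :=
  Matrix.of fun k j =>
    if (j : ℕ) % 2 = 0 then lam ⟨(j : ℕ) / 2, Nat.div_lt_of_lt_mul j.isLt⟩ ^ (k : ℕ)
    else (k : ℝ) * lam ⟨(j : ℕ) / 2, Nat.div_lt_of_lt_mul j.isLt⟩ ^ ((k : ℕ) - 1)

/-!
Over `R[X]`, consider the ordinary Vandermonde matrix on the `2N` nodes `λᵢ` and `λᵢ + X`.
Subtracting the row of `λᵢ` from the row of `λᵢ + X` and dividing by `X` turns the latter into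
the difference-quotient row `((λᵢ + X)ᵏ - λᵢᵏ) / X`, which specialises at `X = 0` to the
derivative row `k λᵢᵏ⁻¹`. Hence `Xᴺ` times the determinant of the difference-quotient matrix is
the Vandermonde product of the doubled nodes; the pairs `(λᵢ, λᵢ + X)` contribute exactly `Xᴺ`,
and after cancelling it and setting `X = 0` each pair `i < j` contributes `(λⱼ - λᵢ)⁴`.
-/

open Finset Polynomial Matrix

def finTwoProdFinEquiv (N : ℕ) : Fin 2 × Fin N ≃ Fin (2 * N) :=
  (Equiv.prodComm _ _).trans (finProdFinEquiv.trans (finCongr (Nat.mul_comm N 2)))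

@[simp]
lemma finTwoProdFinEquiv_apply_val {N : ℕ} (x : Fin 2 × Fin N) :
    (finTwoProdFinEquiv N x : ℕ) = x.1 + 2 * x.2 := rfl

lemma finTwoProdFinEquiv_symm_apply {N : ℕ} (r : Fin (2 * N)) :
    (finTwoProdFinEquiv N).symm r =
      (⟨r % 2, Nat.mod_lt _ two_pos⟩, ⟨r / 2, Nat.div_lt_of_lt_mul r.isLt⟩) := by
  rw [Equiv.symm_apply_eq]
  ext
  simp only [finTwoProdFinEquiv_apply_val]
  omega

lemma finTwoProdFinEquiv_lt_finTwoProdFinEquiv {N : ℕ} {x y : Fin 2 × Fin N} :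
    finTwoProdFinEquiv N x < finTwoProdFinEquiv N y ↔ x.2 < y.2 ∨ x.2 = y.2 ∧ x.1 < y.1 := by
  simp only [Fin.lt_def, Fin.ext_iff, finTwoProdFinEquiv_apply_val]
  omega

lemma Finset.prod_univ_eq_mul_prod_Ioi {α M : Type*} [Fintype α] [LinearOrder α]
    [LocallyFiniteOrderTop α] [CommMonoid M] (f : α → M) (a : α) (hf : ∀ x < a, f x = 1) :
    ∏ x, f x = f a * ∏ x ∈ Ioi a, f x := by
  rw [mul_prod_Ioi_eq_prod_Ici]
  exact (prod_subset (subset_univ _) fun x _ hx => hf x (by simpa using hx)).symm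

theorem prod_Ioi_finTwoProdFinEquiv {M : Type*} [CommMonoid M] {N : ℕ}
    (f : Fin (2 * N) → Fin (2 * N) → M) :
    let e := finTwoProdFinEquiv N
    ∏ a, ∏ b ∈ Ioi a, f a b =
      (∏ i, f (e (0, i)) (e (1, i))) * ∏ i, ∏ j ∈ Ioi i, ∏ p, ∏ q, f (e (p, i)) (e (q, j)) := by
  intro e
  set g : Fin N → Fin N → M := fun i j =>
    ∏ p, ∏ q, if e (p, i) < e (q, j) then f (e (p, i)) (e (q, j)) else 1
  have hlt : ∀ i j, i < j → g i j = ∏ p, ∏ q, f (e (p, i)) (e (q, j)) := fun i j hij => by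
    simp [g, e, finTwoProdFinEquiv_lt_finTwoProdFinEquiv, hij]
  have hgt : ∀ i j, j < i → g i j = 1 := fun i j hji => by
    simp [g, e, finTwoProdFinEquiv_lt_finTwoProdFinEquiv, hji.not_gt, hji.ne']
  have hdiag : ∀ i, g i i = f (e (0, i)) (e (1, i)) := fun i => by
    simp [g, e, finTwoProdFinEquiv_lt_finTwoProdFinEquiv, Fin.prod_univ_two]
  calc ∏ a, ∏ b ∈ Ioi a, f a b = ∏ i, ∏ j, g i j := by
        simp_rw [← filter_lt_eq_Ioi, prod_filter, g, ← e.prod_comp, Fintype.prod_prod_type_right]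
        exact prod_congr rfl fun i _ => prod_comm
    _ = ∏ i, g i i * ∏ j ∈ Ioi i, g i j :=
        prod_congr rfl fun i _ => prod_univ_eq_mul_prod_Ioi _ i fun j hj => hgt i j hj
    _ = _ := by
        rw [prod_mul_distrib]
        simp_rw [hdiag]
        congr 1
        exact prod_congr rfl fun i _ => prod_congr rfl fun j hj => hlt i j (mem_Ioi.mp hj)

lemma X_add_C_pow_eq_C_pow_add_X_mul_divX {R : Type*} [CommRing R] (a : R) (k : ℕ) :
    (X + C a) ^ k = C a ^ k + X * divX ((X + C a) ^ k) := by
  conv_lhs => rw [← X_mul_divX_add ((X + C a) ^ k)]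
  rw [coeff_X_add_C_pow, Nat.choose_zero_right, Nat.sub_zero, Nat.cast_one, mul_one, C_pow,
    add_comm]

section

variable {R : Type*} [CommRing R] {N : ℕ} (lam : Fin N → R)

noncomputable def doubledNodes : Fin 2 × Fin N → R[X] :=
  fun x => ![C (lam x.2), X + C (lam x.2)] x.1

noncomputable def diffQuotientMatrix : Matrix (Fin 2 × Fin N) (Fin (2 * N)) R[X] :=
  of fun x k => ![C (lam x.2) ^ (k : ℕ), divX ((X + C (lam x.2)) ^ (k : ℕ))] x.1

def confluentRows : Matrix (Fin 2 × Fin N) (Fin (2 * N)) R :=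
  of fun x k => ![lam x.2 ^ (k : ℕ), k * lam x.2 ^ ((k : ℕ) - 1)] x.1

lemma of_pow_doubledNodes :
    of (fun x (k : Fin (2 * N)) => doubledNodes lam x ^ (k : ℕ)) =
      blockDiagonal (fun _ : Fin N => !![(1 : R[X]), 0; 1, X]) * diffQuotientMatrix lam := by
  ext ⟨p, i⟩ k : 1
  rw [of_apply, mul_apply, Fintype.sum_prod_type]
  simp only [blockDiagonal_apply]
  fin_cases p
  · simp [doubledNodes, diffQuotientMatrix]
  · simpa [doubledNodes, diffQuotientMatrix, Fin.sum_univ_two]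
      using X_add_C_pow_eq_C_pow_add_X_mul_divX (lam i) k

lemma det_vandermonde_doubledNodes_eq_X_pow_mul :
    det (vandermonde (doubledNodes lam ∘ (finTwoProdFinEquiv N).symm)) =
      X ^ N * det ((diffQuotientMatrix lam).submatrix (finTwoProdFinEquiv N).symm id) := by
  have hsub : vandermonde (doubledNodes lam ∘ (finTwoProdFinEquiv N).symm) =
      (of fun x (k : Fin (2 * N)) => doubledNodes lam x ^ (k : ℕ)).submatrix
        (finTwoProdFinEquiv N).symm id := rfl
  rw [hsub, of_pow_doubledNodes, submatrix_mul _ _ _ _ _ (finTwoProdFinEquiv N).symm.bijective,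
    det_mul, det_submatrix_equiv_self, det_blockDiagonal]
  simp [det_fin_two_of]

lemma det_vandermonde_doubledNodes :
    det (vandermonde (doubledNodes lam ∘ (finTwoProdFinEquiv N).symm)) =
      X ^ N * ∏ i, ∏ j ∈ Ioi i, ∏ p, ∏ q, (doubledNodes lam (q, j) - doubledNodes lam (p, i)) := by
  rw [det_vandermonde, prod_Ioi_finTwoProdFinEquiv]
  simp [doubledNodes]

lemma det_diffQuotientMatrix :
    det ((diffQuotientMatrix lam).submatrix (finTwoProdFinEquiv N).symm id) =
      ∏ i, ∏ j ∈ Ioi i, ∏ p, ∏ q, (doubledNodes lam (q, j) - doubledNodes lam (p, i)) :=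
  (isRegular_X_pow N).left.eq_iff.mp <|
    (det_vandermonde_doubledNodes_eq_X_pow_mul lam).symm.trans (det_vandermonde_doubledNodes lam)

lemma diffQuotientMatrix_map_eval_zero :
    (diffQuotientMatrix lam).map (eval 0) = confluentRows lam := by
  ext ⟨p, i⟩ k
  fin_cases p
  · simp [diffQuotientMatrix, confluentRows]
  · simp [diffQuotientMatrix, confluentRows, ← coeff_zero_eq_eval_zero, coeff_X_add_C_pow,
      mul_comm]

theorem det_confluentRows :
    det ((confluentRows lam).submatrix (finTwoProdFinEquiv N).symm id) =
      ∏ i, ∏ j ∈ Ioi i, (lam i - lam j) ^ 4 := by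
  rw [← diffQuotientMatrix_map_eval_zero, submatrix_map, ← coe_evalRingHom,
    ← RingHom.mapMatrix_apply, ← RingHom.map_det, det_diffQuotientMatrix]
  simp only [map_prod]
  refine prod_congr rfl fun i _ => prod_congr rfl fun j _ => ?_
  simp [doubledNodes, Fin.prod_univ_two]
  ring

end

lemma confluentVandermonde_eq_transpose_confluentRows (N : ℕ) (lam : Fin N → ℝ) :
    confluentVandermonde N lam =
      ((confluentRows lam).submatrix (finTwoProdFinEquiv N).symm id)ᵀ := by
  ext k j
  rcases Nat.mod_two_eq_zero_or_one j with h | h <;>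
    simp [confluentVandermonde, confluentRows, finTwoProdFinEquiv_symm_apply, h]

theorem stmt_2 (N : ℕ) (lam : Fin N → ℝ) :
    (confluentVandermonde N lam).det
      = ∏ i : Fin N, ∏ j ∈ Finset.Ioi i, (lam i - lam j) ^ 4 := by
  rw [confluentVandermonde_eq_transpose_confluentRows, det_transpose, det_confluentRows]
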